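/- Let M be the set of sequences α : ℕ → ℝ such that α_n > 0 for all n, α is bounded above, and (ln α_n)_n is completely alternating (i.e., the weight sequences of moment infinitely divisible weighted shifts). Then the Aluthge transform map A, defined on sequences by A(α)_n = √(α_n · α_{n+1}), is a bijection from M onto M: A maps M into M, is injective on M, and for every β ∈ M there exists α ∈ M with A(α) = β. -/
import Mathlib


/-- The `n`-th iterated forward difference of a sequence, evaluated at `k`. -/
noncomputable def fdiff (a : ℕ → ℝ) (n k : ℕ) : ℝ :=
  ∑ i ∈ Finset.range (n + 1), (-1 : ℝ) ^ i * (n.choose i : ℝ) * a (k + i)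

/-- A sequence is completely alternating if all iterated forward differences of
order `n ≥ 1` are nonpositive. -/
def CompletelyAlternating (a : ℕ → ℝ) : Prop :=
  ∀ n : ℕ, 1 ≤ n → ∀ k : ℕ, fdiff a n k ≤ 0

section AluthgeAux

open Finset Filter Topology


lemma fdiff_one (a : ℕ → ℝ) (k : ℕ) : fdiff a 1 k = a k - a (k + 1) := by
  simp [fdiff, Finset.sum_range_succ]
  ring

lemma fdiff_succ (a : ℕ → ℝ) (n k : ℕ) :
    fdiff a (n + 1) k = fdiff a n k - fdiff a n (k + 1) := by
  have h1 : fdiff a (n + 1) k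
      = ∑ i ∈ range (n + 2), (-1 : ℝ) ^ i * ((n.choose i : ℝ) + (n.choose (i-1) : ℝ) * (if i = 0 then 0 else 1)) * a (k + i) := by
    refine Finset.sum_congr rfl fun i _ => ?_
    rcases i with _ | j
    · simp
    · rw [if_neg (Nat.succ_ne_zero _)]
      push_cast [Nat.choose_succ_succ]
      ring
  rw [h1]
  have h2 : ∀ i ∈ range (n+2), (-1 : ℝ) ^ i * ((n.choose i : ℝ) + (n.choose (i-1) : ℝ) * (if i = 0 then 0 else 1)) * a (k + i)
      = (-1 : ℝ) ^ i * (n.choose i : ℝ) * a (k + i) + (-1:ℝ)^i * (n.choose (i-1) : ℝ) * (if i = 0 then 0 else 1) * a (k+i) := by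
    intro i _; ring
  rw [Finset.sum_congr rfl h2, Finset.sum_add_distrib]
  congr 1
  · rw [show n + 2 = (n+1)+1 from rfl, Finset.sum_range_succ]
    simp [fdiff, Nat.choose_succ_self]
  · rw [Finset.sum_range_succ' (fun i => (-1:ℝ)^i * (n.choose (i-1) : ℝ) * (if i = 0 then 0 else 1) * a (k+i))]
    have h3 : ∀ x ∈ range (n+1), (-1:ℝ)^(x+1) * ((n.choose (x+1-1)):ℝ) * (if x+1=0 then 0 else 1) * a (k+(x+1)) = -((-1:ℝ)^x * ((n.choose x):ℝ) * a (k+1+x)) := by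
      intro x _
      rw [if_neg (Nat.succ_ne_zero _)]
      have hx : k + (x+1) = k + 1 + x := by omega
      rw [hx, Nat.add_sub_cancel]
      ring
    rw [Finset.sum_congr rfl h3, Finset.sum_neg_distrib]
    simp [fdiff]


lemma alt_choose_sum (n : ℕ) (hn : 1 ≤ n) :
    ∑ i ∈ range (n + 1), (-1 : ℝ) ^ i * (n.choose i : ℝ) = 0 := by
  have := Int.alternating_sum_range_choose_of_ne (n := n) (by omega)
  have h2 : ((∑ i ∈ range (n + 1), (-1 : ℤ) ^ i * (n.choose i : ℤ) : ℤ) : ℝ) = 0 := by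
    rw [this]; norm_num
  rw [← h2]; push_cast; ring

lemma fdiff_const (c : ℝ) (n k : ℕ) (hn : 1 ≤ n) : fdiff (fun _ => c) n k = 0 := by
  simp only [fdiff]
  rw [← Finset.sum_mul]
  rw [alt_choose_sum n hn, zero_mul]

lemma fdiff_sub (a b : ℕ → ℝ) (n k : ℕ) :
    fdiff (fun m => a m - b m) n k = fdiff a n k - fdiff b n k := by
  simp only [fdiff, ← Finset.sum_sub_distrib]
  exact Finset.sum_congr rfl fun i _ => by ring

lemma fdiff_avg (a : ℕ → ℝ) (n k : ℕ) :
    fdiff (fun m => (a m + a (m + 1)) / 2) n k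
      = (fdiff a n k + fdiff a n (k + 1)) / 2 := by
  simp only [fdiff, Finset.sum_div, ← Finset.sum_add_distrib]
  refine Finset.sum_congr rfl fun i _ => ?_
  have hx : k + 1 + i = k + i + 1 := by omega
  rw [hx]; ring


lemma ca_mono {a : ℕ → ℝ} (h : CompletelyAlternating a) : Monotone a := by
  refine monotone_nat_of_le_succ fun k => ?_
  have := h 1 le_rfl k
  rw [fdiff_one] at this
  linarith

lemma fdiff_tendsto_zero {a : ℕ → ℝ} {L : ℝ} (hL : Tendsto a atTop (𝓝 L))
    (n : ℕ) (hn : 1 ≤ n) : Tendsto (fun k => fdiff a n k) atTop (𝓝 0) := by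
  have h : Tendsto (fun k => fdiff a n k) atTop
      (𝓝 (∑ i ∈ range (n + 1), (-1:ℝ)^i * (n.choose i : ℝ) * L)) := by
    refine tendsto_finset_sum _ fun i _ => ?_
    exact (hL.comp (tendsto_add_atTop_nat i)).const_mul _
  have h2 : (∑ i ∈ range (n + 1), (-1:ℝ)^i * (n.choose i : ℝ) * L) = 0 := by
    rw [← Finset.sum_mul, alt_choose_sum n hn, zero_mul]
  rwa [h2] at h

lemma fdiff_const_mul (a : ℕ → ℝ) (c : ℝ) (n k : ℕ) :
    fdiff (fun m => c * a m) n k = c * fdiff a n k := by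
  simp only [fdiff, Finset.mul_sum]
  exact Finset.sum_congr rfl fun i _ => by ring

lemma alt_limit {e : ℕ → ℝ} (he : Antitone e) (h0 : Tendsto e atTop (𝓝 0)) :
    ∃ l, 0 ≤ l ∧ Tendsto (fun N => ∑ j ∈ range N, (-1:ℝ)^j * e j) atTop (𝓝 l) := by
  obtain ⟨l, hl⟩ := he.tendsto_alternating_series_of_tendsto_zero h0
  refine ⟨l, ?_, hl⟩
  have := he.alternating_series_le_tendsto hl 0
  simpa using this

lemma ca_tendsto {b : ℕ → ℝ} (hca : CompletelyAlternating b) {C : ℝ}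
    (hC : ∀ n, b n ≤ C) : ∃ L, (∀ n, b n ≤ L) ∧ Tendsto b atTop (𝓝 L) := by
  have hmono := ca_mono hca
  have hbdd : BddAbove (Set.range b) := ⟨C, by rintro x ⟨n, rfl⟩; exact hC n⟩
  refine ⟨⨆ n, b n, fun n => le_ciSup hbdd n, tendsto_atTop_ciSup hmono hbdd⟩

lemma surj_aux {b : ℕ → ℝ} (hca : CompletelyAlternating b) {C : ℝ}
    (hC : ∀ n, b n ≤ C) :
    ∃ a : ℕ → ℝ, CompletelyAlternating a ∧ (∃ D, ∀ n, a n ≤ D) ∧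
      ∀ n, a n + a (n + 1) = 2 * b n := by
  obtain ⟨L, hbL, hL⟩ := ca_tendsto hca hC
  set d : ℕ → ℝ := fun j => L - b j with hd
  have hdant : Antitone d := fun i j hij => by
    simp only [hd]; have := ca_mono hca hij; linarith
  have hd0 : Tendsto d atTop (𝓝 0) := by
    have := (tendsto_const_nhds (x := L) (f := atTop)).sub hL
    simpa using this
  have hshift : ∀ n : ℕ, Tendsto (fun j => d (n + j)) atTop (𝓝 0) := by
    intro n
    have : (fun j => d (n + j)) = d ∘ (fun j => j + n) := by
      funext j; simp [Nat.add_comm]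
    rw [this]
    exact hd0.comp (tendsto_add_atTop_nat n)
  have hS : ∀ n : ℕ, ∃ l, 0 ≤ l ∧
      Tendsto (fun N => ∑ j ∈ range N, (-1:ℝ)^j * d (n + j)) atTop (𝓝 l) := by
    intro n
    exact alt_limit (fun i j hij => hdant (by omega)) (hshift n)
  choose S hS0 hSt using hS
  -- recurrence: S n + S (n+1) = d n
  have hrec : ∀ n, S n + S (n + 1) = d n := by
    intro n
    have h1 : Tendsto (fun N => ∑ j ∈ range (N + 1), (-1:ℝ)^j * d (n + j))
        atTop (𝓝 (S n)) := (hSt n).comp (tendsto_add_atTop_nat 1)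
    have h2 : ∀ N : ℕ, ∑ j ∈ range (N + 1), (-1:ℝ)^j * d (n + j)
        = d n - ∑ j ∈ range N, (-1:ℝ)^j * d (n + 1 + j) := by
      intro N
      rw [Finset.sum_range_succ' (fun j => (-1:ℝ)^j * d (n + j))]
      have : ∀ j ∈ range N, (-1:ℝ)^(j+1) * d (n + (j+1)) = -((-1:ℝ)^j * d (n + 1 + j)) := by
        intro j _
        have : n + (j + 1) = n + 1 + j := by omega
        rw [this]; ring
      rw [Finset.sum_congr rfl this, Finset.sum_neg_distrib]
      simp; ring
    have h3 : Tendsto (fun N => ∑ j ∈ range (N + 1), (-1:ℝ)^j * d (n + j))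
        atTop (𝓝 (d n - S (n + 1))) := by
      simp only [h2]
      exact tendsto_const_nhds.sub (hSt (n + 1))
    have := tendsto_nhds_unique h1 h3
    linarith
  refine ⟨fun n => L - 2 * S n, ?_, ⟨L, fun n => by have := hS0 n; show L - 2 * S n ≤ L; linarith⟩, fun n => by
    have := hrec n; simp only [hd] at this ⊢; linarith⟩
  -- completely alternating
  intro n hn k
  have hdfd : ∀ j, fdiff d n j = - fdiff b n j := by
    intro j
    have : fdiff d n j = fdiff (fun _ => L) n j - fdiff b n j := fdiff_sub _ _ _ _
    rw [this, fdiff_const L n j hn]; ring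
  set e : ℕ → ℝ := fun j => fdiff d n (k + j) with he
  have he_ant : Antitone e := by
    refine antitone_nat_of_succ_le fun j => ?_
    have h1 := hca (n + 1) (by omega) (k + j)
    rw [fdiff_succ] at h1
    simp only [he, hdfd]
    have : k + (j + 1) = k + j + 1 := by omega
    rw [this]; linarith
  have he0 : Tendsto e atTop (𝓝 0) := by
    have h1 : Tendsto (fun j => fdiff d n j) atTop (𝓝 0) :=
      fdiff_tendsto_zero hd0 n hn
    have : e = (fun j => fdiff d n j) ∘ (fun j => j + k) := by
      funext j; simp [he, Nat.add_comm]
    rw [this]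
    exact h1.comp (tendsto_add_atTop_nat k)
  obtain ⟨m, hm0, hmt⟩ := alt_limit he_ant he0
  -- fdiff S n k equals m
  have hsum_eq : ∀ N : ℕ,
      ∑ i ∈ range (n + 1), (-1:ℝ)^i * (n.choose i : ℝ) *
        (∑ j ∈ range N, (-1:ℝ)^j * d (k + i + j))
      = ∑ j ∈ range N, (-1:ℝ)^j * e j := by
    intro N
    simp only [he, fdiff, Finset.mul_sum]
    rw [Finset.sum_comm]
    refine Finset.sum_congr rfl fun j _ => ?_
    refine Finset.sum_congr rfl fun i _ => ?_
    have : k + i + j = k + j + i := by omega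
    rw [this]; ring
  have h1 : Tendsto (fun N => ∑ i ∈ range (n + 1), (-1:ℝ)^i * (n.choose i : ℝ) *
      (∑ j ∈ range N, (-1:ℝ)^j * d (k + i + j))) atTop
      (𝓝 (∑ i ∈ range (n + 1), (-1:ℝ)^i * (n.choose i : ℝ) * S (k + i))) := by
    refine tendsto_finset_sum _ fun i _ => ?_
    exact (hSt (k + i)).const_mul _
  have h2 : Tendsto (fun N => ∑ i ∈ range (n + 1), (-1:ℝ)^i * (n.choose i : ℝ) *
      (∑ j ∈ range N, (-1:ℝ)^j * d (k + i + j))) atTop (𝓝 m) := by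
    simp only [hsum_eq]; exact hmt
  have hfS : ∑ i ∈ range (n + 1), (-1:ℝ)^i * (n.choose i : ℝ) * S (k + i) = m :=
    tendsto_nhds_unique h1 h2
  -- conclude
  have : fdiff (fun m' => L - 2 * S m') n k
      = fdiff (fun _ => L) n k - 2 * fdiff S n k := by
    rw [fdiff_sub (fun _ => L) (fun m' => 2 * S m') n k, fdiff_const_mul S 2 n k]
  rw [this, fdiff_const L n k hn]
  have : fdiff S n k = m := hfS
  rw [this]
  linarith

lemma inj_aux {a a' : ℕ → ℝ} {L L' : ℝ}
    (hLa : Tendsto a atTop (𝓝 L)) (hLa' : Tendsto a' atTop (𝓝 L'))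
    (h : ∀ n, a n + a (n + 1) = a' n + a' (n + 1)) : a = a' := by
  have sign : ∀ n, a n - a' n = (-1:ℝ)^n * (a 0 - a' 0) := by
    intro n
    induction n with
    | zero => simp
    | succ n ih =>
      have hh := h n
      have e : (-1:ℝ)^(n+1) * (a 0 - a' 0) = -((-1:ℝ)^n * (a 0 - a' 0)) := by ring
      rw [e]; linarith
  have hdiff : Tendsto (fun n => a n - a' n) atTop (𝓝 (L - L')) := hLa.sub hLa'
  have h2 : Tendsto (fun m : ℕ => 2 * m) atTop atTop :=
    tendsto_atTop_mono (fun m => by simp only [id_eq]; omega) tendsto_id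
  have h3 : Tendsto (fun m : ℕ => 2 * m + 1) atTop atTop :=
    tendsto_atTop_mono (fun m => by simp only [id_eq]; omega) tendsto_id
  have he : Tendsto (fun _ : ℕ => a 0 - a' 0) atTop (𝓝 (L - L')) := by
    have := hdiff.comp h2
    have hfe : ((fun n => a n - a' n) ∘ (fun m : ℕ => 2 * m)) = fun _ : ℕ => a 0 - a' 0 := by
      funext m; simp only [Function.comp]; rw [sign]; simp [pow_mul]
    rwa [hfe] at this
  have ho : Tendsto (fun _ : ℕ => -(a 0 - a' 0)) atTop (𝓝 (L - L')) := by
    have := hdiff.comp h3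
    have hfo : ((fun n => a n - a' n) ∘ (fun m : ℕ => 2 * m + 1)) = fun _ : ℕ => -(a 0 - a' 0) := by
      funext m; simp only [Function.comp]; rw [sign, pow_succ, pow_mul]; simp
    rwa [hfo] at this
  have e1 : a 0 - a' 0 = L - L' := tendsto_nhds_unique tendsto_const_nhds he
  have e2 : -(a 0 - a' 0) = L - L' := tendsto_nhds_unique tendsto_const_nhds ho
  have e0 : a 0 = a' 0 := by linarith
  funext n
  have := sign n
  rw [e0] at this
  simp at this
  linarith

end AluthgeAux

/-- The set of weight sequences of moment infinitely divisible weighted shifts: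
positive, bounded above, log completely alternating. -/
def MIDWeights : Set (ℕ → ℝ) :=
  {α | (∀ n, 0 < α n) ∧ (∃ C : ℝ, ∀ n, α n ≤ C) ∧
    CompletelyAlternating (fun n => Real.log (α n))}

/-- The Aluthge transform on weight sequences. -/
noncomputable def aluthge (α : ℕ → ℝ) : ℕ → ℝ :=
  fun n => Real.sqrt (α n * α (n + 1))

theorem stmt11 :
    (∀ α ∈ MIDWeights, aluthge α ∈ MIDWeights) ∧
    (∀ α ∈ MIDWeights, ∀ α' ∈ MIDWeights,
      aluthge α = aluthge α' → α = α') ∧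
    (∀ β ∈ MIDWeights, ∃ α ∈ MIDWeights, aluthge α = β) := by
  refine ⟨?_, ?_, ?_⟩
  · rintro α ⟨hpos, ⟨C, hC⟩, hca⟩
    have hC0 : 0 < C := lt_of_lt_of_le (hpos 0) (hC 0)
    refine ⟨fun n => Real.sqrt_pos.mpr (mul_pos (hpos n) (hpos (n+1))), ⟨C, fun n => ?_⟩, ?_⟩
    · calc Real.sqrt (α n * α (n+1))
          ≤ Real.sqrt (C * C) := Real.sqrt_le_sqrt
            (mul_le_mul (hC n) (hC (n+1)) (hpos (n+1)).le hC0.le)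
        _ = C := Real.sqrt_mul_self hC0.le
    · have hlog : (fun n => Real.log (aluthge α n))
          = fun n => (Real.log (α n) + Real.log (α (n+1))) / 2 := by
        funext n
        rw [show aluthge α n = Real.sqrt (α n * α (n+1)) from rfl,
          Real.log_sqrt (mul_pos (hpos n) (hpos (n+1))).le,
          Real.log_mul (hpos n).ne' (hpos (n+1)).ne']
      intro n hn k
      rw [hlog, fdiff_avg]
      have h1 := hca n hn k
      have h2 := hca n hn (k+1)
      linarith
  · rintro α ⟨hpos, ⟨C, hC⟩, hca⟩ α' ⟨hpos', ⟨C', hC'⟩, hca'⟩ heq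
    have hprod : ∀ n, α n * α (n+1) = α' n * α' (n+1) := by
      intro n
      have h1 : Real.sqrt (α n * α (n+1)) = Real.sqrt (α' n * α' (n+1)) := congrFun heq n
      have := congrArg (fun x : ℝ => x ^ 2) h1
      simpa [Real.sq_sqrt (mul_pos (hpos n) (hpos (n+1))).le,
        Real.sq_sqrt (mul_pos (hpos' n) (hpos' (n+1))).le] using this
    have hlb : ∀ n, Real.log (α n) ≤ Real.log C := fun n => Real.log_le_log (hpos n) (hC n)
    have hlb' : ∀ n, Real.log (α' n) ≤ Real.log C' := fun n => Real.log_le_log (hpos' n) (hC' n)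
    obtain ⟨L, _, hL⟩ := ca_tendsto hca hlb
    obtain ⟨L', _, hL'⟩ := ca_tendsto hca' hlb'
    have heqlog : (fun n => Real.log (α n)) = fun n => Real.log (α' n) := by
      refine inj_aux hL hL' fun n => ?_
      show Real.log (α n) + Real.log (α (n+1)) = Real.log (α' n) + Real.log (α' (n+1))
      rw [← Real.log_mul (hpos n).ne' (hpos (n+1)).ne',
        ← Real.log_mul (hpos' n).ne' (hpos' (n+1)).ne', hprod n]
    funext n
    calc α n = Real.exp (Real.log (α n)) := (Real.exp_log (hpos n)).symm
      _ = Real.exp (Real.log (α' n)) := by rw [congrFun heqlog n]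
      _ = α' n := Real.exp_log (hpos' n)
  · rintro β ⟨hpos, ⟨C, hC⟩, hca⟩
    have hlb : ∀ n, Real.log (β n) ≤ Real.log C :=
      fun n => Real.log_le_log (hpos n) (hC n)
    obtain ⟨a, haca, ⟨D, hD⟩, hab⟩ := surj_aux hca hlb
    refine ⟨fun n => Real.exp (a n), ⟨fun n => Real.exp_pos _,
      ⟨Real.exp D, fun n => Real.exp_le_exp.mpr (hD n)⟩, ?_⟩, ?_⟩
    · have h : (fun n => Real.log (Real.exp (a n))) = a := funext fun n => Real.log_exp _
      show CompletelyAlternating (fun n => Real.log (Real.exp (a n)))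
      rw [h]; exact haca
    · funext n
      show Real.sqrt (Real.exp (a n) * Real.exp (a (n+1))) = β n
      rw [← Real.exp_add, hab n]
      have h2 : Real.exp (2 * Real.log (β n)) = β n * β n := by
        rw [two_mul, Real.exp_add, Real.exp_log (hpos n)]
      rw [h2, Real.sqrt_mul_self (hpos n).le]
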